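/- arXiv:2409.10727 — 7 statements merged into one kernel-verified Lean document; each statement's English description precedes it below -/
import Mathlib

section
/- The Stitch sortition algorithm is fair: if all weights satisfy w_n < 1/M, then for each participant n, the expected voting power E[g(n;M)] equals w_n, and the selected committee always has exactly M members. -/
/-!
Participant `n` owns the interval `[b n, b (n + 1))` of length `w n`, where `b` is the sequence of
prefix sums of the weights; these intervals tile `[0, 1)`. The `M` points `{x + i/M}` are `1/M`
apart on the circle `ℝ/ℤ`, so an interval of length at most `1/M` contains at most one of them.
Hence the indicator of `n` being selected is the sum over `i` of the indicators of
`{x + i/M} ∈ [b n, b (n + 1))`, each of which has integral `w n` because `x ↦ {x + c}` preserves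
Lebesgue measure on `[0, 1)`; the expected power is `M · w n · (1/M) = w n`. Summing the same
identity over `n` instead counts every point exactly once, so the committee has `M` members.
-/

open Finset

/-- The committee selected by `Stitch`: participant `n` (whose interval is
`[b n, b n + w n)` with `b n = ∑_{k<n} w k`) is selected iff some point `{x + i/M}` lies in
its interval. -/
noncomputable def stitchCommittee (N M : ℕ) (w : Fin N → ℝ) (x : ℝ) : Finset (Fin N) :=
  Finset.univ.filter (fun n =>
    ∃ i ∈ Finset.range M, Int.fract (x + i / M) ∈
      Set.Ico (∑ k ∈ Finset.univ.filter (· < n), w k)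
              ((∑ k ∈ Finset.univ.filter (· < n), w k) + w n))

open MeasureTheory

theorem exists_lt_mem_Ico_succ {α : Type*} [LinearOrder α] (f : ℕ → α) {y : α} :
    ∀ {n : ℕ}, y ∈ Set.Ico (f 0) (f n) → ∃ i < n, y ∈ Set.Ico (f i) (f (i + 1))
  | 0, hy => absurd hy.2 (not_lt.mpr hy.1)
  | n + 1, hy => by
    by_cases h : y < f n
    · obtain ⟨i, hi, hyi⟩ := exists_lt_mem_Ico_succ f ⟨hy.1, h⟩
      exact ⟨i, hi.trans n.lt_succ_self, hyi⟩
    · exact ⟨n, n.lt_succ_self, not_lt.mp h, hy.2⟩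

theorem Monotone.eq_of_mem_Ico_succ {α : Type*} [Preorder α] {f : ℕ → α} (hf : Monotone f)
    {y : α} {i j : ℕ} (hi : y ∈ Set.Ico (f i) (f (i + 1)))
    (hj : y ∈ Set.Ico (f j) (f (j + 1))) : i = j := by
  by_contra hij
  exact Set.disjoint_left.mp (hf.pairwise_disjoint_on_Ico_succ hij) hi hj

theorem eq_of_fract_add_div_mem_Ico {M i j : ℕ} (hi : i < M) (hj : j < M) {x a b : ℝ}
    (hab : b ≤ a + 1 / M) (hxi : Int.fract (x + i / M) ∈ Set.Ico a b)
    (hxj : Int.fract (x + j / M) ∈ Set.Ico a b) : i = j := by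
  have hM : (0 : ℝ) < M := Nat.cast_pos.mpr (by omega)
  set K : ℤ := ⌊x + i / M⌋ - ⌊x + j / M⌋
  have hdiff :
      Int.fract (x + i / M) - Int.fract (x + j / M) = ((i - j : ℤ) - K * M : ℝ) / M := by
    simp only [Int.fract, K]; push_cast; field_simp; ring
  have hlt : |((i - j : ℤ) - K * M : ℝ)| < 1 := by
    have : |Int.fract (x + i / M) - Int.fract (x + j / M)| < 1 / M :=
      abs_sub_lt_iff.mpr ⟨by linarith [hxi.2, hxj.1], by linarith [hxi.1, hxj.2]⟩
    rwa [hdiff, abs_div, abs_of_pos hM, div_lt_div_iff_of_pos_right hM] at this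
  have hmul : (i - j : ℤ) = K * M := by
    have := (Int.abs_lt_one_iff (a := (i - j : ℤ) - K * M)).mp (by exact_mod_cast hlt)
    linarith
  have : (i - j : ℤ) = 0 :=
    Int.eq_zero_of_abs_lt_dvd ⟨K, by rw [hmul, mul_comm]⟩ (by rw [abs_lt]; omega)
  omega

theorem intervalIntegral_comp_fract_add {E : Type*} [NormedAddCommGroup E] [NormedSpace ℝ E]
    (f : ℝ → E) (c : ℝ) :
    ∫ x in (0 : ℝ)..1, f (Int.fract (x + c)) = ∫ x in (0 : ℝ)..1, f x := by
  have hper : Function.Periodic (f ∘ Int.fract) 1 := (Int.fract_periodic ℝ).comp f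
  calc ∫ x in (0 : ℝ)..1, f (Int.fract (x + c))
      = ∫ x in c..1 + c, f (Int.fract x) := by
        rw [intervalIntegral.integral_comp_add_right (fun y => f (Int.fract y)), zero_add]
    _ = ∫ x in (0 : ℝ)..0 + 1, f (Int.fract x) := by
        rw [add_comm 1 c]; exact hper.intervalIntegral_add_eq c 0
    _ = ∫ x in (0 : ℝ)..1, f x := by
      rw [zero_add]
      refine intervalIntegral.integral_congr_ae ((Measure.ae_ne volume 1).mono fun x hx1 hx => ?_)
      rw [Set.uIoc_of_le zero_le_one] at hx
      rw [Int.fract_eq_self.mpr ⟨hx.1.le, hx.2.lt_of_ne hx1⟩]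

theorem intervalIntegral_indicator_Ico {E : Type*} [NormedAddCommGroup E] [NormedSpace ℝ E]
    [CompleteSpace E] {a b : ℝ} (ha : 0 ≤ a) (hab : a ≤ b) (hb : b ≤ 1) (v : E) :
    ∫ x in (0 : ℝ)..1, (Set.Ico a b).indicator (fun _ => v) x = (b - a) • v := by
  rw [intervalIntegral.integral_of_le zero_le_one, ← integral_Icc_eq_integral_Ioc,
    setIntegral_indicator measurableSet_Ico,
    Set.inter_eq_right.mpr (Set.Ico_subset_Icc_self.trans (Set.Icc_subset_Icc ha hb)),
    setIntegral_const, Real.volume_real_Ico_of_le hab]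

theorem intervalIntegrable_indicator_comp_fract_add {E : Type*} [NormedAddCommGroup E]
    {s : Set ℝ} (hs : MeasurableSet s) (v : E) (c a b : ℝ) :
    IntervalIntegrable (fun x => s.indicator (fun _ => v) (Int.fract (x + c))) volume a b :=
  (intervalIntegrable_const (c := v)).mono_fun
    ((stronglyMeasurable_const.indicator hs).comp_measurable
      (measurable_fract.comp (measurable_add_const c))).aestronglyMeasurable
    (Filter.Eventually.of_forall fun _ => norm_indicator_le_norm_self _ _)

namespace Stitch

/-- Indexed by `ℕ`, so that `prefixSum w (n + 1)` makes sense also for the last participant. -/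
noncomputable def prefixSum {β : Type*} [AddCommMonoid β] {N : ℕ} (w : Fin N → β)
    (j : ℕ) : β :=
  ∑ k ∈ univ.filter (fun k : Fin N => (k : ℕ) < j), w k

section prefixSum

variable {β : Type*} {N : ℕ}

@[simp]
theorem prefixSum_zero [AddCommMonoid β] (w : Fin N → β) : prefixSum w 0 = 0 := by
  simp [prefixSum]

theorem prefixSum_succ [AddCommMonoid β] (w : Fin N → β) (n : Fin N) :
    prefixSum w (n + 1 : ℕ) = prefixSum w n + w n := by
  have : univ.filter (fun k : Fin N => (k : ℕ) < n + 1) =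
      insert n (univ.filter (fun k : Fin N => (k : ℕ) < n)) := by
    ext k
    simp only [mem_filter, mem_univ, true_and, mem_insert, Fin.ext_iff]
    omega
  rw [prefixSum, prefixSum, this, sum_insert (by simp), add_comm]

theorem prefixSum_of_le [AddCommMonoid β] (w : Fin N → β) {j : ℕ} (hj : N ≤ j) :
    prefixSum w j = ∑ k, w k := by
  rw [prefixSum, filter_true_of_mem fun k _ => k.2.trans_le hj]

theorem monotone_prefixSum [AddCommMonoid β] [PartialOrder β] [IsOrderedAddMonoid β]
    {w : Fin N → β} (hw : ∀ n, 0 ≤ w n) : Monotone (prefixSum w) :=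
  fun _ _ hij => sum_le_sum_of_subset_of_nonneg
    (fun k hk => by simp only [mem_filter, mem_univ, true_and] at hk ⊢; omega)
    (fun k _ _ => hw k)

end prefixSum

noncomputable def interval {N : ℕ} (w : Fin N → ℝ) (n : Fin N) : Set ℝ :=
  Set.Ico (prefixSum w n) (prefixSum w (n + 1 : ℕ))

variable {N M : ℕ} {w : Fin N → ℝ}

theorem mem_stitchCommittee_iff {x : ℝ} {n : Fin N} :
    n ∈ stitchCommittee N M w x ↔
      ∃ i ∈ range M, Int.fract (x + i / M) ∈ interval w n := by
  have : ∑ k ∈ univ.filter (· < n), w k = prefixSum w n := by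
    simp only [prefixSum, Fin.lt_def]
  simp [stitchCommittee, interval, this, prefixSum_succ]

theorem ite_mem_stitchCommittee {β : Type*} [AddCommMonoid β] {n : Fin N} (hn : w n ≤ 1 / M)
    (x : ℝ) (c : β) :
    (if n ∈ stitchCommittee N M w x then c else 0) =
      ∑ i ∈ range M, (interval w n).indicator (fun _ => c) (Int.fract (x + i / M)) := by
  have hlen : prefixSum w (n + 1 : ℕ) ≤ prefixSum w n + 1 / M := by
    rw [prefixSum_succ]; linarith
  by_cases h : ∃ i ∈ range M, Int.fract (x + i / M) ∈ interval w n
  · obtain ⟨i, hi, hxi⟩ := h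
    rw [if_pos (mem_stitchCommittee_iff.mpr ⟨i, hi, hxi⟩), sum_eq_single_of_mem i hi,
      Set.indicator_of_mem hxi]
    exact fun j hj hji => Set.indicator_of_notMem (fun hxj => hji
      (eq_of_fract_add_div_mem_Ico (mem_range.mp hj) (mem_range.mp hi) hlen hxj hxi)) _
  · rw [if_neg (mt mem_stitchCommittee_iff.mp h)]
    exact (sum_eq_zero fun i hi => Set.indicator_of_notMem (fun hxi => h ⟨i, hi, hxi⟩) _).symm

theorem sum_indicator_interval {β : Type*} [AddCommMonoid β] (hw : ∀ n, 0 ≤ w n)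
    (hsum : ∑ n, w n = 1) {y : ℝ} (hy : y ∈ Set.Ico 0 1) (c : β) :
    ∑ n, (interval w n).indicator (fun _ => c) y = c := by
  obtain ⟨i, hi, hyi⟩ := exists_lt_mem_Ico_succ (prefixSum w) (n := N)
    (by rwa [prefixSum_zero, prefixSum_of_le w le_rfl, hsum])
  have huniq (m : Fin N) (hym : y ∈ interval w m) : m = ⟨i, hi⟩ :=
    Fin.ext ((monotone_prefixSum hw).eq_of_mem_Ico_succ hym hyi)
  rw [sum_eq_single ⟨i, hi⟩ (fun m _ hm => Set.indicator_of_notMem (mt (huniq m) hm) _)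
      (by simp),
    Set.indicator_of_mem (s := interval w ⟨i, hi⟩) hyi]

theorem card_stitchCommittee (hw : ∀ n, 0 ≤ w n) (hsum : ∑ n, w n = 1)
    (hmax : ∀ n, w n ≤ 1 / M) (x : ℝ) : (stitchCommittee N M w x).card = M :=
  calc (stitchCommittee N M w x).card
      = ∑ n, if n ∈ stitchCommittee N M w x then 1 else 0 := by simp
    _ = ∑ n, ∑ i ∈ range M, (interval w n).indicator (fun _ => 1) (Int.fract (x + i / M)) :=
        sum_congr rfl fun n _ => ite_mem_stitchCommittee (hmax n) x 1
    _ = ∑ i ∈ range M, ∑ n, (interval w n).indicator (fun _ => 1) (Int.fract (x + i / M)) :=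
        sum_comm
    _ = ∑ i ∈ range M, 1 := sum_congr rfl fun i _ =>
        sum_indicator_interval hw hsum ⟨Int.fract_nonneg _, Int.fract_lt_one _⟩ 1
    _ = M := by simp

theorem integral_indicator_interval_comp_fract_add (hw : ∀ n, 0 ≤ w n) (hsum : ∑ n, w n = 1)
    (n : Fin N) (c v : ℝ) :
    ∫ x in (0 : ℝ)..1, (interval w n).indicator (fun _ => v) (Int.fract (x + c)) = w n * v := by
  have ha : 0 ≤ prefixSum w n := sum_nonneg fun k _ => hw k
  have hab : prefixSum w n ≤ prefixSum w (n + 1 : ℕ) := monotone_prefixSum hw n.val.le_succ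
  have hb : prefixSum w (n + 1 : ℕ) ≤ 1 :=
    (monotone_prefixSum hw n.2).trans_eq (by rw [prefixSum_of_le w le_rfl, hsum])
  rw [intervalIntegral_comp_fract_add, interval, intervalIntegral_indicator_Ico ha hab hb,
    prefixSum_succ, add_sub_cancel_left, smul_eq_mul]

theorem integral_ite_mem_stitchCommittee (hw : ∀ n, 0 ≤ w n) (hsum : ∑ n, w n = 1) {n : Fin N}
    (hn : w n ≤ 1 / M) (v : ℝ) :
    ∫ x in (0 : ℝ)..1, (if n ∈ stitchCommittee N M w x then v else 0) = M * w n * v :=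
  calc ∫ x in (0 : ℝ)..1, (if n ∈ stitchCommittee N M w x then v else 0)
      = ∫ x in (0 : ℝ)..1, ∑ i ∈ range M,
          (interval w n).indicator (fun _ => v) (Int.fract (x + i / M)) :=
        intervalIntegral.integral_congr fun x _ => ite_mem_stitchCommittee hn x v
    _ = ∑ i ∈ range M, ∫ x in (0 : ℝ)..1,
          (interval w n).indicator (fun _ => v) (Int.fract (x + i / M)) :=
        intervalIntegral.integral_finsetSum fun i _ =>
          intervalIntegrable_indicator_comp_fract_add measurableSet_Ico v _ 0 1
    _ = ∑ i ∈ range M, w n * v :=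
        sum_congr rfl fun i _ => integral_indicator_interval_comp_fract_add hw hsum n _ v
    _ = M * w n * v := by simp [mul_assoc]

end Stitch

/-- Stitch is fair (each participant's expected voting power, with voting
power 1/M upon selection and x uniform on [0,1], equals its weight) and the committee
always has exactly M members. -/
theorem stmt_2 (N M : ℕ) (hM : 1 ≤ M) (w : Fin N → ℝ)
    (hw : ∀ n, 0 < w n) (hwsum : ∑ n, w n = 1) (hmax : ∀ n, w n < 1 / M) :
    (∀ n : Fin N,
      (∫ x in (0:ℝ)..1, (if n ∈ stitchCommittee N M w x then (1 / M : ℝ) else 0)) = w n) ∧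
    (∀ x ∈ Set.Ico (0:ℝ) 1, (stitchCommittee N M w x).card = M) := by
  have hw₀ n := (hw n).le
  have hmax' n := (hmax n).le
  refine ⟨fun n => ?_, fun x _ => Stitch.card_stitchCommittee hw₀ hwsum hmax' x⟩
  have hM₀ : (M : ℝ) ≠ 0 := by positivity
  rw [Stitch.integral_ite_mem_stitchCommittee hw₀ hwsum (hmax' n)]
  field_simp
end

section
/- In Cumulative Rejection Sampling, if each M-subset M of [N] is chosen with probability (1/binom(N−1,M−1))·Σ_{j∈M} p_j where Σ_i p_i = 1, and each selected member receives voting power 1/M, then the expected voting power of participant i equals p_i/M + (1−p_i)(M−1)/(M(N−1)). -/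
/-!
Exchanging the two sums, the expected voting power of `i` is `1 / (C M)` times
`∑ j, p j * #{M-subsets containing i and j}`, where `C = (N - 1).choose (M - 1)`.
That count is `C` for `j = i` and `(N - 2).choose (M - 2)` otherwise, and
`(N - 2).choose (M - 2) / C = (M - 1) / (N - 1)`.
-/

open Finset

section DoubleCounting

variable {α R : Type*} [DecidableEq α] [AddCommMonoid R]

theorem Finset.sum_sum_eq_sum_card_filter_nsmul (B : Finset (Finset α)) {s : Finset α}
    (hB : ∀ t ∈ B, t ⊆ s) (f : α → R) :
    ∑ t ∈ B, ∑ j ∈ t, f j = ∑ j ∈ s, #{t ∈ B | j ∈ t} • f j := by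
  rw [sum_comm' (t' := s) (s' := fun j => {t ∈ B | j ∈ t})]
  · simp only [sum_const]
  · intro t j
    simp only [mem_filter]
    exact ⟨fun ⟨ht, hj⟩ => ⟨⟨ht, hj⟩, hB t ht hj⟩, fun ⟨h, _⟩ => h⟩

theorem Finset.card_filter_mem_powersetCard {s : Finset α} {i : α} (hi : i ∈ s) (k : ℕ) :
    #{t ∈ s.powersetCard (k + 1) | i ∈ t} = (#s - 1).choose k := by
  simpa using card_filter_powersetCard_subset {i} s (k + 1) (by simpa) (by simp)

theorem Finset.card_filter_pair_mem_powersetCard {s : Finset α} {i j : α} (hi : i ∈ s)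
    (hj : j ∈ s) (hij : i ≠ j) (k : ℕ) :
    #{t ∈ s.powersetCard (k + 2) | i ∈ t ∧ j ∈ t} = (#s - 2).choose k := by
  have hsub : ({i, j} : Finset α) ⊆ s := insert_subset hi (singleton_subset_iff.mpr hj)
  have hcard : #({i, j} : Finset α) = 2 := card_pair hij
  simpa [insert_subset_iff, hcard] using card_filter_powersetCard_subset {i, j} s (k + 2) hsub
    (by rw [hcard]; omega)

theorem Finset.sum_filter_mem_powersetCard_sum {s : Finset α} {i : α} (hi : i ∈ s) (k : ℕ)
    (f : α → R) :
    ∑ t ∈ s.powersetCard (k + 2) with i ∈ t, ∑ j ∈ t, f j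
      = (#s - 1).choose (k + 1) • f i + (#s - 2).choose k • ∑ j ∈ s.erase i, f j := by
  rw [sum_sum_eq_sum_card_filter_nsmul _ (fun t ht => (mem_powersetCard.mp (mem_filter.mp ht).1).1),
    ← add_sum_erase s _ hi, smul_sum]
  simp only [filter_filter]
  congr 1
  · simpa only [and_self] using congrArg (· • f i) (card_filter_mem_powersetCard hi (k + 1))
  · refine sum_congr rfl fun j hj => ?_
    obtain ⟨hji, hj⟩ := mem_erase.mp hj
    rw [card_filter_pair_mem_powersetCard hi hj (Ne.symm hji)]

end DoubleCounting

theorem stmt_5_general (N M : ℕ) (hM : 2 < M) (hMN : M < N) (p : Fin N → ℝ)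
    (hpsum : ∑ i, p i = 1) (i : Fin N) :
    ∑ 𝓜 ∈ Finset.univ.powersetCard M,
        ((1 / ((N - 1).choose (M - 1) : ℝ)) * ∑ j ∈ 𝓜, p j) *
          (if i ∈ 𝓜 then (1 / M : ℝ) else 0)
      = p i / M + (1 - p i) * (M - 1) / (M * (N - 1)) := by
  obtain ⟨k, rfl⟩ : ∃ k, M = k + 2 := ⟨M - 2, by omega⟩
  obtain ⟨n, rfl⟩ : ∃ n, N = n + 2 := ⟨N - 2, by omega⟩
  have hrest : ∑ j ∈ univ.erase i, p j = 1 - p i := by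
    rw [← hpsum, ← add_sum_erase _ _ (mem_univ i), add_sub_cancel_left]
  have hchoose : ((n : ℝ) + 1) * n.choose k = (n + 1).choose (k + 1) * (k + 1) := by
    exact_mod_cast Nat.add_one_mul_choose_eq n k
  have hpos : (0 : ℝ) < (n + 1).choose (k + 1) := by exact_mod_cast Nat.choose_pos (by omega)
  simp only [mul_ite, mul_zero]
  rw [← sum_filter, ← sum_mul, ← mul_sum, sum_filter_mem_powersetCard_sum (mem_univ i), hrest]
  simp only [card_univ, Fintype.card_fin, nsmul_eq_mul, Nat.add_sub_cancel]
  push_cast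
  rw [show (n : ℝ) + 2 - 1 = n + 1 by ring, show (k : ℝ) + 2 - 1 = k + 1 by ring]
  field_simp
  linear_combination (1 - p i) * hchoose

/-- under the distribution P(𝓜) = (1/C(N−1,M−1))·Σ_{j∈𝓜} p_j on M-subsets,
with each selected member receiving voting power 1/M, the expected voting power of
participant i equals p_i/M + (1−p_i)(M−1)/(M(N−1)). -/
theorem stmt_5 (N M : ℕ) (hM : 2 < M) (hMN : M < N) (p : Fin N → ℝ)
    (hp : ∀ i, 0 ≤ p i) (hpsum : ∑ i, p i = 1) (i : Fin N) :
    ∑ 𝓜 ∈ Finset.univ.powersetCard M,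
        ((1 / ((N - 1).choose (M - 1) : ℝ)) * ∑ j ∈ 𝓜, p j) *
          (if i ∈ 𝓜 then (1 / M : ℝ) else 0)
      = p i / M + (1 - p i) * (M - 1) / (M * (N - 1)) :=
  stmt_5_general N M hM hMN p hpsum i
end

section
/- Weighted Rejection Sampling is fair: if each M-subset M with Σ_{m∈M} w_m ≥ α is chosen with probability C·Σ_{j∈M} p_j (and probability 0 otherwise), where p_i = (w_i/C_i(α)) / Σ_j (w_j/C_j(α)) and C_i(α) is the number of M-subsets containing i with total weight ≥ α, and participant i ∈ M receives voting power p_i / Σ_{j∈M} p_j, then the expected voting power of each participant i equals w_i (for the appropriate normalizing constant C). -/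
/-!
Each committee `𝓜` is drawn with probability `C · Σ_{j∈𝓜} p_j`, and its member `i` gets the
share `p_i / Σ_{j∈𝓜} p_j`, so the committee total cancels and `i` gains exactly `C · p_i` from
every valid committee containing it. Its expected voting power is therefore `C · p_i · C_i(α)`,
which is `C · w_i / S` with `S = Σ_j w_j / C_j(α)`. Double counting the normalisation
`Σ_𝓜 C · Σ_{j∈𝓜} p_j = 1` gives `C · Σ_j p_j C_j(α) = C / S = 1`, so `C = S`.
-/

open Finset

/-- The number of M-subsets containing `i` with total weight at least `α`. -/
noncomputable def Calpha (N M : ℕ) (w : Fin N → ℝ) (α : ℝ) (i : Fin N) : ℕ :=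
  ((Finset.univ.powersetCard M).filter
    (fun 𝓜 => i ∈ 𝓜 ∧ α ≤ ∑ m ∈ 𝓜, w m)).card

section FamilyOfFinsets

variable {ι : Type*} [DecidableEq ι] (F : Finset (Finset ι)) (p : ι → ℝ)

theorem sum_sum_mem_eq_sum_mul_card [Fintype ι] :
    ∑ s ∈ F, ∑ j ∈ s, p j = ∑ j, p j * #{s ∈ F | j ∈ s} := by
  have hinner : ∀ s : Finset ι, ∑ j ∈ s, p j = ∑ j, if j ∈ s then p j else 0 := fun s => by
    rw [sum_ite_mem, univ_inter]
  simp_rw [hinner]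
  rw [sum_comm]
  refine sum_congr rfl fun j _ => ?_
  rw [← sum_boole, mul_sum]
  exact sum_congr rfl fun s _ => by split_ifs <;> simp

theorem sum_mul_share_eq_mul_card (hp : ∀ j, 0 < p j) (c : ℝ) (i : ι) :
    ∑ s ∈ F, (c * ∑ j ∈ s, p j) * (if i ∈ s then p i / ∑ j ∈ s, p j else 0)
      = c * p i * #{s ∈ F | i ∈ s} := by
  rw [← sum_boole, mul_sum]
  refine sum_congr rfl fun s _ => ?_
  split_ifs with hi
  · have hpos : 0 < ∑ j ∈ s, p j := sum_pos (fun j _ => hp j) ⟨i, hi⟩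
    field_simp
  · simp

end FamilyOfFinsets

noncomputable def validCommittees (N M : ℕ) (w : Fin N → ℝ) (α : ℝ) : Finset (Finset (Fin N)) :=
  (univ.powersetCard M).filter (fun 𝓜 => α ≤ ∑ m ∈ 𝓜, w m)

theorem Calpha_eq_card_validCommittees_mem (N M : ℕ) (w : Fin N → ℝ) (α : ℝ) (i : Fin N) :
    Calpha N M w α i = #{𝓜 ∈ validCommittees N M w α | i ∈ 𝓜} := by
  rw [Calpha, validCommittees, filter_filter]
  simp only [and_comm]

theorem stmt_8_general (N M : ℕ) (α : ℝ)
    (w : Fin N → ℝ) (hw : ∀ i, 0 < w i) (hwsum : ∑ i, w i = 1)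
    (hC : ∀ i, 0 < Calpha N M w α i)
    (p : Fin N → ℝ)
    (hp : ∀ i, p i = (w i / (Calpha N M w α i : ℝ)) /
      ∑ j, w j / (Calpha N M w α j : ℝ))
    (C : ℝ)
    (hnorm : ∑ 𝓜 ∈ (Finset.univ.powersetCard M).filter (fun 𝓜 => α ≤ ∑ m ∈ 𝓜, w m),
        C * ∑ j ∈ 𝓜, p j = 1) :
    ∀ i : Fin N,
      ∑ 𝓜 ∈ (Finset.univ.powersetCard M).filter (fun 𝓜 => α ≤ ∑ m ∈ 𝓜, w m),
          (C * ∑ j ∈ 𝓜, p j) *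
            (if i ∈ 𝓜 then p i / ∑ j ∈ 𝓜, p j else 0)
        = w i := by
  intro i
  set S := ∑ j, w j / (Calpha N M w α j : ℝ)
  have hCalpha_pos : ∀ j, (0 : ℝ) < Calpha N M w α j := fun j => by exact_mod_cast hC j
  have hS : 0 < S := sum_pos (fun j _ => div_pos (hw j) (hCalpha_pos j)) ⟨i, mem_univ i⟩
  have hp_pos : ∀ j, 0 < p j := fun j => by
    rw [hp]; exact div_pos (div_pos (hw j) (hCalpha_pos j)) hS
  have hp_mul : ∀ j, p j * #{𝓜 ∈ validCommittees N M w α | j ∈ 𝓜} = w j / S := fun j => by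
    rw [← Calpha_eq_card_validCommittees_mem, hp]
    field_simp [(hCalpha_pos j).ne']
  have hCS : C = S := by
    change ∑ 𝓜 ∈ validCommittees N M w α, _ = 1 at hnorm
    simp_rw [← mul_sum, sum_sum_mem_eq_sum_mul_card, hp_mul, ← sum_div, hwsum] at hnorm
    field_simp at hnorm
    linarith
  change ∑ 𝓜 ∈ validCommittees N M w α, _ = _
  rw [sum_mul_share_eq_mul_card _ _ hp_pos, mul_assoc, hp_mul, hCS]
  field_simp

/-- Weighted Rejection Sampling is fair. With
p_i = (w_i/C_i(α)) / Σ_j (w_j/C_j(α)), a valid committee 𝓜 (of size M, weight ≥ α) chosen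
with probability C·Σ_{j∈𝓜} p_j (probabilities summing to 1), and member i of 𝓜 receiving
voting power p_i/Σ_{j∈𝓜} p_j, every participant's expected voting power equals its weight. -/
theorem stmt_8 (N M : ℕ) (hM : 2 < M) (hMN : M < N) (α : ℝ) (hα0 : 0 < α) (hα1 : α < 1)
    (w : Fin N → ℝ) (hw : ∀ i, 0 < w i) (hwsum : ∑ i, w i = 1)
    (hC : ∀ i, 0 < Calpha N M w α i)
    (p : Fin N → ℝ)
    (hp : ∀ i, p i = (w i / (Calpha N M w α i : ℝ)) /
      ∑ j, w j / (Calpha N M w α j : ℝ))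
    (C : ℝ)
    (hnorm : ∑ 𝓜 ∈ (Finset.univ.powersetCard M).filter (fun 𝓜 => α ≤ ∑ m ∈ 𝓜, w m),
        C * ∑ j ∈ 𝓜, p j = 1) :
    ∀ i : Fin N,
      ∑ 𝓜 ∈ (Finset.univ.powersetCard M).filter (fun 𝓜 => α ≤ ∑ m ∈ 𝓜, w m),
          (C * ∑ j ∈ 𝓜, p j) *
            (if i ∈ 𝓜 then p i / ∑ j ∈ 𝓜, p j else 0)
        = w i :=
  stmt_8_general N M α w hw hwsum hC p hp C hnorm
end

section
/- Weighted Rejection Sampling is λ-decentralized with λ ≥ min_i w_i·(1 + F_i/p_i), where F_i is the sum of the M−1 smallest values among {p_j : j ≠ i}: for any M-subset M containing i, the voting power p_i/Σ_{j∈M} p_j is at most p_i/(p_i + F_i) ≤ (1/λ)·w_i. -/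
open Finset

section MinimalSums

variable {ι : Type*} [Fintype ι] [DecidableEq ι] (p : ι → ℝ) {i : ι} {k : ℕ} {F : ℝ}

lemma nonneg_of_isLeast_subset_sums (hp : ∀ j, 0 ≤ p j)
    (hF : IsLeast {x : ℝ | ∃ s : Finset ι, s ⊆ univ.erase i ∧ s.card = k ∧
      x = ∑ j ∈ s, p j} F) : 0 ≤ F := by
  obtain ⟨s, -, -, rfl⟩ := hF.1
  exact sum_nonneg fun j _ => hp j

lemma add_le_sum_of_isLeast_subset_sums {𝓜 : Finset ι} (hi : i ∈ 𝓜)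
    (hF : IsLeast {x : ℝ | ∃ s : Finset ι, s ⊆ univ.erase i ∧ s.card = 𝓜.card - 1 ∧
      x = ∑ j ∈ s, p j} F) : p i + F ≤ ∑ j ∈ 𝓜, p j := by
  have hrest : F ≤ ∑ j ∈ 𝓜.erase i, p j :=
    hF.2 ⟨𝓜.erase i, erase_subset_erase i (subset_univ 𝓜), card_erase_of_mem hi, rfl⟩
  rw [← add_sum_erase 𝓜 p hi]
  exact add_le_add_right hrest (p i)

end MinimalSums

lemma div_add_le_one_div_mul {p F w L : ℝ} (hp : 0 < p) (hF : 0 ≤ F) (hL : 0 < L)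
    (hLw : L ≤ w * (1 + F / p)) : p / (p + F) ≤ 1 / L * w := by
  have hpF : 0 < p + F := by linarith
  have hLw' : p * L ≤ w * (p + F) := by
    calc p * L ≤ p * (w * (1 + F / p)) := mul_le_mul_of_nonneg_left hLw hp.le
      _ = w * (p + F) := by field_simp
  rw [one_div, inv_mul_eq_div, div_le_div_iff₀ hpF hL]
  linarith

theorem stmt_11_general (N M : ℕ) (hN : 0 < N)
    (w p : Fin N → ℝ) (hw : ∀ i, 0 < w i)
    (hp : ∀ i, 0 < p i)
    (F : Fin N → ℝ)
    (hF : ∀ i, IsLeast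
      {x : ℝ | ∃ s : Finset (Fin N), s ⊆ Finset.univ.erase i ∧ s.card = M - 1 ∧
        x = ∑ j ∈ s, p j} (F i)) :
    ∀ 𝓜 ∈ Finset.univ.powersetCard M, ∀ i ∈ 𝓜,
      p i / ∑ j ∈ 𝓜, p j ≤ p i / (p i + F i) ∧
      p i / (p i + F i) ≤
        (1 / (Finset.univ.inf' ⟨⟨0, hN⟩, Finset.mem_univ _⟩
          (fun i => w i * (1 + F i / p i)))) * w i := by
  intro 𝓜 h𝓜 i hi
  have hF0 j : 0 ≤ F j := nonneg_of_isLeast_subset_sums p (fun j => (hp j).le) (hF j)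
  have hcard : 𝓜.card = M := (mem_powersetCard.mp h𝓜).2
  have hsum : p i + F i ≤ ∑ j ∈ 𝓜, p j :=
    add_le_sum_of_isLeast_subset_sums p hi (hcard ▸ hF i)
  have hLpos : 0 < univ.inf' ⟨⟨0, hN⟩, mem_univ _⟩ (fun j => w j * (1 + F j / p j)) :=
    (lt_inf'_iff _).2 fun j _ => by have := hF0 j; have := hp j; have := hw j; positivity
  have hpF : 0 < p i + F i := add_pos_of_pos_of_nonneg (hp i) (hF0 i)
  exact ⟨div_le_div_of_nonneg_left (hp i).le hpF hsum,
    div_add_le_one_div_mul (hp i) (hF0 i) hLpos (inf'_le _ (mem_univ i))⟩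

/-- Weighted Rejection Sampling is λ-decentralized with
λ = min_i w_i·(1 + F_i/p_i), where F_i (characterized as the least possible sum of an
(M−1)-subset of {p_j : j ≠ i}) is the sum of the M−1 smallest p_j's excluding p_i: for any
M-subset 𝓜 containing i, the voting power p_i/Σ_{j∈𝓜} p_j is at most p_i/(p_i+F_i), which
is at most (1/λ)·w_i. -/
theorem stmt_11 (N M : ℕ) (hN : 0 < N) (hM : 1 < M) (hMN : M ≤ N)
    (w p : Fin N → ℝ) (hw : ∀ i, 0 < w i) (hwsum : ∑ i, w i = 1)
    (hp : ∀ i, 0 < p i)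
    (F : Fin N → ℝ)
    (hF : ∀ i, IsLeast
      {x : ℝ | ∃ s : Finset (Fin N), s ⊆ Finset.univ.erase i ∧ s.card = M - 1 ∧
        x = ∑ j ∈ s, p j} (F i)) :
    ∀ 𝓜 ∈ Finset.univ.powersetCard M, ∀ i ∈ 𝓜,
      p i / ∑ j ∈ 𝓜, p j ≤ p i / (p i + F i) ∧
      p i / (p i + F i) ≤
        (1 / (Finset.univ.inf' ⟨⟨0, hN⟩, Finset.mem_univ _⟩
          (fun i => w i * (1 + F i / p i)))) * w i :=
  stmt_11_general N M hN w p hw hp F hF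
end

section
/- The number q_M(1) of M-element subsets of [N]\{i} (i.e. of {1,...,N} not containing the fixed index i) having weight sum less than V equals Σ_{m=0}^{M} (−1)^m Σ_{v=0}^{V−m·w_i−1} D[v, M−m, N], where Σ_{v=0}^{V−m·w_i−1} D[v, M−m, N] is the number of (M−m)-element subsets of [N] with weight sum less than V − m·w_i, and these subsets may or may not contain i. -/
open Finset

/-- `D w v k N` : number of k-subsets of {1,…,N} whose weights sum to v. -/
def Dcount (w : ℕ → ℕ) (v : ℤ) (k N : ℕ) : ℕ :=
  (((Finset.Icc 1 N).powersetCard k).filter (fun s => ∑ j ∈ s, (w j : ℤ) = v)).card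

lemma sumD (w : ℕ → ℕ) (N k T : ℕ) :
    ∑ v ∈ Finset.range T, (Dcount w (v : ℤ) k N : ℤ)
      = ((((Finset.Icc 1 N).powersetCard k).filter (fun s => ∑ j ∈ s, w j < T)).card : ℤ) := by
  have h1 : ∀ v : ℕ, Dcount w (v : ℤ) k N
      = (((Finset.Icc 1 N).powersetCard k).filter (fun s => ∑ j ∈ s, w j = v)).card := by
    intro v
    unfold Dcount
    congr 1
    apply Finset.filter_congr
    intro s _
    constructor
    · intro h; exact_mod_cast h
    · intro h; exact_mod_cast h
  simp only [h1]
  have : ∑ v ∈ Finset.range T,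
      ((((Finset.Icc 1 N).powersetCard k).filter (fun s => ∑ j ∈ s, w j = v)).card)
      = (((Finset.Icc 1 N).powersetCard k).filter (fun s => ∑ j ∈ s, w j < T)).card := by
    simp only [Finset.card_filter]
    rw [Finset.sum_comm]
    apply Finset.sum_congr rfl
    intro s _
    have := Finset.sum_ite_eq (Finset.range T) (∑ j ∈ s, w j) (fun _ => (1 : ℕ))
    simp only [Finset.mem_range] at this
    rw [← this]
  rw [← this]
  push_cast
  rfl

lemma split (w : ℕ → ℕ) (N k T i : ℕ) (hi : i ∈ Finset.Icc 1 N) :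
    (((Finset.Icc 1 N).powersetCard (k+1)).filter (fun s => ∑ j ∈ s, w j < T)).card
      = ((((Finset.Icc 1 N).erase i).powersetCard (k+1)).filter (fun s => ∑ j ∈ s, w j < T)).card
        + ((((Finset.Icc 1 N).erase i).powersetCard k).filter (fun s => ∑ j ∈ s, w j < T - w i)).card := by
  classical
  set A := ((Finset.Icc 1 N).powersetCard (k+1)).filter (fun s => ∑ j ∈ s, w j < T) with hA
  rw [← Finset.card_filter_add_card_filter_not (s := A) (p := fun s => i ∉ s)]
  congr 1
  · -- subsets not containing i
    congr 1
    ext s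
    simp only [hA, Finset.mem_filter, Finset.mem_powersetCard, Finset.subset_erase]
    tauto
  · -- subsets containing i : bijection with erase i
    refine Finset.card_bij' (fun s _ => s.erase i) (fun t _ => insert i t) ?_ ?_ ?_ ?_
    · intro s hs
      simp only [hA, Finset.mem_filter, Finset.mem_powersetCard, not_not] at hs
      obtain ⟨⟨⟨hsub, hcard⟩, hsum⟩, hmem⟩ := hs
      simp only [Finset.mem_filter, Finset.mem_powersetCard, Finset.subset_erase]
      refine ⟨⟨⟨fun x hx => hsub (Finset.mem_of_mem_erase hx), Finset.notMem_erase _ _⟩, ?_⟩, ?_⟩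
      · rw [Finset.card_erase_of_mem hmem, hcard]
        omega
      · rw [Nat.lt_sub_iff_add_lt]
        rwa [Finset.sum_erase_add _ _ hmem]
    · intro t ht
      simp only [Finset.mem_filter, Finset.mem_powersetCard, Finset.subset_erase] at ht
      obtain ⟨⟨⟨hsub, hni⟩, hcard⟩, hsum⟩ := ht
      simp only [hA, Finset.mem_filter, Finset.mem_powersetCard, not_not]
      refine ⟨⟨⟨Finset.insert_subset hi hsub, ?_⟩, ?_⟩, Finset.mem_insert_self i t⟩
      · rw [Finset.card_insert_of_notMem hni, hcard]
      · rw [Finset.sum_insert hni]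
        omega
    · intro s hs
      simp only [hA, Finset.mem_filter, not_not] at hs
      exact Finset.insert_erase hs.2
    · intro t ht
      simp only [Finset.mem_filter, Finset.mem_powersetCard, Finset.subset_erase] at ht
      exact Finset.erase_insert ht.1.1.2

lemma telescope (a : ℕ → ℤ) (n : ℕ) :
    ∑ m ∈ Finset.range n, (-1 : ℤ) ^ m * (a m + a (m + 1)) = a 0 - (-1) ^ n * a n := by
  induction n with
  | zero => simp
  | succ n ih => rw [Finset.sum_range_succ, ih]; ring

/-- the number of M-subsets of [N]\{i} with weight sum less than V equals
q_M(1) = Σ_{m=0}^{M} (−1)^m Σ_{v=0}^{V−m·w_i−1} D[v, M−m, N]. -/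
theorem stmt_14 (N M V : ℕ) (hV : 0 < V) (w : ℕ → ℕ) (hw : ∀ j, 0 < w j)
    (i : ℕ) (hi : i ∈ Finset.Icc 1 N) (hMN : M ≤ N) :
    (((((Finset.Icc 1 N).erase i).powersetCard M).filter
        (fun s => ∑ j ∈ s, w j < V)).card : ℤ)
      = ∑ m ∈ Finset.range (M + 1),
          (-1 : ℤ) ^ m * ∑ v ∈ Finset.range (V - m * w i), (Dcount w v (M - m) N : ℤ) := by
  classical
  set a : ℕ → ℤ := fun m =>
    (((((Finset.Icc 1 N).erase i).powersetCard (M - m)).filter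
        (fun s => ∑ j ∈ s, w j < V - m * w i)).card : ℤ) with ha
  have key : ∀ m ∈ Finset.range (M + 1),
      (-1 : ℤ) ^ m * ∑ v ∈ Finset.range (V - m * w i), (Dcount w v (M - m) N : ℤ)
        = if m = M then (-1 : ℤ) ^ m * a m else (-1 : ℤ) ^ m * (a m + a (m + 1)) := by
    intro m hm
    rw [Finset.mem_range] at hm
    have hcast : ∀ v ∈ Finset.range (V - m * w i), (Dcount w v (M - m) N : ℤ) = (Dcount w ((v : ℕ) : ℤ) (M - m) N : ℤ) := by
      intro v _; rfl
    rw [sumD]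
    by_cases hmM : m = M
    · subst hmM
      simp only [if_pos rfl, ha, Nat.sub_self]
      congr 2
      simp [Finset.powersetCard_zero]
    · rw [if_neg hmM]
      have hm' : m < M := by omega
      have hk : M - m = (M - (m + 1)) + 1 := by omega
      rw [hk, split w N (M - (m+1)) (V - m * w i) i hi]
      simp only [ha]
      have h2 : V - m * w i - w i = V - (m + 1) * w i := by
        rw [Nat.sub_sub, Nat.succ_mul]
      rw [h2, hk]
      push_cast
      ring
  rw [Finset.sum_congr rfl key]
  rw [Finset.sum_range_succ, Finset.sum_congr rfl (fun m hm => if_neg (by rw [Finset.mem_range] at hm; omega)),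
    if_pos rfl, telescope]
  simp only [ha, Nat.sub_self, zero_mul, Nat.sub_zero]
  ring
end

section
/- If the function w ↦ V(w) giving expected voting power as a function of weight satisfies V(w) = V(x·w) + V((1−x)·w) for all weights w > 0 and all x ∈ (0,1) (robustness to splitting and merging), and the total weight is normalized so that Σ w_i = 1 forces V to be additive with V(1) = 1, then V(w) = w for all w ∈ (0,1]. -/
/-! Splitting a weight into the parts `a` and `b` makes `V` additive on `(0, 1]`, so
`n * V (1 / n) = V 1 = 1` and `V (m / n) = m / n` for `0 < m ≤ n`. A monotone function that is the
identity on the rationals of an interval is the identity on the whole interval. -/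

open Set

section Additive

variable {V : ℝ → ℝ} {c : ℝ}

theorem map_add_of_split
    (hsplit : ∀ w ∈ Ioc 0 c, ∀ x ∈ Ioo (0 : ℝ) 1, V w = V (x * w) + V ((1 - x) * w))
    {a b : ℝ} (ha : 0 < a) (hb : 0 < b) (hab : a + b ≤ c) : V (a + b) = V a + V b := by
  have hsum : 0 < a + b := add_pos ha hb
  have hx : a / (a + b) ∈ Ioo (0 : ℝ) 1 :=
    ⟨div_pos ha hsum, (div_lt_one hsum).2 (lt_add_of_pos_right a hb)⟩
  have hfst : a / (a + b) * (a + b) = a := div_mul_cancel₀ a hsum.ne'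
  have hsnd : (1 - a / (a + b)) * (a + b) = b := by field_simp; ring
  simpa only [hfst, hsnd] using hsplit (a + b) ⟨hsum, hab⟩ _ hx

theorem map_natCast_mul_of_map_add
    (hadd : ∀ a b : ℝ, 0 < a → 0 < b → a + b ≤ c → V (a + b) = V a + V b)
    {a : ℝ} (ha : 0 < a) {n : ℕ} (hn : 0 < n) (hna : n * a ≤ c) : V (n * a) = n * V a := by
  induction n, hn using Nat.le_induction with
  | base => simp
  | succ n hn ih =>
    push_cast at hna ⊢
    rw [add_one_mul] at hna ⊢
    rw [hadd _ _ (by positivity) ha hna, ih (by linarith), add_one_mul]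

end Additive

theorem map_natCast_div_of_map_add {V : ℝ → ℝ}
    (hadd : ∀ a b : ℝ, 0 < a → 0 < b → a + b ≤ 1 → V (a + b) = V a + V b) (hV1 : V 1 = 1)
    {m n : ℕ} (hm : 0 < m) (hmn : m ≤ n) : V (m / n) = m / n := by
  have hn : (0 : ℝ) < n := by exact_mod_cast hm.trans_le hmn
  have hinv : V (1 / n) = 1 / n := by
    have h := map_natCast_mul_of_map_add hadd (one_div_pos.2 hn) (hm.trans_le hmn)
      (mul_one_div_cancel hn.ne').le
    rw [mul_one_div_cancel hn.ne', hV1] at h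
    field_simp
    linarith
  have hmn' : (m : ℝ) * (1 / n) ≤ 1 := by
    rw [mul_one_div, div_le_one hn]
    exact_mod_cast hmn
  rw [← mul_one_div, map_natCast_mul_of_map_add hadd (one_div_pos.2 hn) hm hmn', hinv]

theorem Rat.exists_nat_div_of_pos_of_le_one {q : ℚ} (hq : 0 < q) (hq1 : q ≤ 1) :
    ∃ m n : ℕ, 0 < m ∧ m ≤ n ∧ (q : ℝ) = m / n := by
  have hq_eq : (q : ℝ) = q.num.natAbs / q.den := by
    rw [Rat.cast_def, Nat.cast_natAbs, abs_of_nonneg (Rat.num_nonneg.2 hq.le)]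
  refine ⟨q.num.natAbs, q.den, Int.natAbs_pos.2 (Rat.num_pos.2 hq).ne', ?_, hq_eq⟩
  have : (q.num.natAbs : ℝ) / q.den ≤ 1 := hq_eq ▸ (by exact_mod_cast hq1)
  exact_mod_cast (div_le_one (by positivity)).1 this

theorem MonotoneOn.eq_self_of_eq_self_on_rat {f : ℝ → ℝ} {a b : ℝ} (hf : MonotoneOn f (Ioo a b))
    (hq : ∀ q : ℚ, (q : ℝ) ∈ Ioo a b → f q = q) {w : ℝ} (hw : w ∈ Ioo a b) : f w = w := by
  apply le_antisymm
  · by_contra! hlt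
    obtain ⟨q, hwq, hq_lt⟩ := exists_rat_btwn (lt_min hlt hw.2)
    have hqab : (q : ℝ) ∈ Ioo a b := ⟨hw.1.trans hwq, hq_lt.trans_le (min_le_right _ _)⟩
    have := hf hw hqab hwq.le
    rw [hq q hqab] at this
    exact (this.trans_lt (hq_lt.trans_le (min_le_left _ _))).false
  · by_contra! hlt
    obtain ⟨q, hq_gt, hqw⟩ := exists_rat_btwn (max_lt hlt hw.1)
    have hqab : (q : ℝ) ∈ Ioo a b := ⟨(le_max_right _ _).trans_lt hq_gt, hqw.trans hw.2⟩
    have := hf hqab hw hqw.le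
    rw [hq q hqab] at this
    exact (((le_max_left _ _).trans_lt hq_gt).trans_le this).false

/-- if V : (0,1] → ℝ satisfies V(w) = V(xw) + V((1−x)w) for all w ∈ (0,1] and
x ∈ (0,1), is monotone on (0,1], and V(1) = 1, then V(w) = w on (0,1]. -/
theorem stmt_17 (V : ℝ → ℝ)
    (hsplit : ∀ w ∈ Set.Ioc (0:ℝ) 1, ∀ x ∈ Set.Ioo (0:ℝ) 1,
      V w = V (x * w) + V ((1 - x) * w))
    (hmono : MonotoneOn V (Set.Ioc (0:ℝ) 1))
    (hV1 : V 1 = 1) :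
    ∀ w ∈ Set.Ioc (0:ℝ) 1, V w = w := by
  have hadd := fun a b (ha : 0 < a) (hb : 0 < b) (hab : a + b ≤ 1) => map_add_of_split hsplit ha hb hab
  have hrat : ∀ q : ℚ, (q : ℝ) ∈ Ioo 0 1 → V q = q := by
    intro q ⟨hq0, hq1⟩
    obtain ⟨m, n, hm, hmn, hqmn⟩ :=
      Rat.exists_nat_div_of_pos_of_le_one (by exact_mod_cast hq0) (by exact_mod_cast hq1.le)
    rw [hqmn, map_natCast_div_of_map_add hadd hV1 hm hmn]
  intro w ⟨hw0, hw1⟩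
  rcases hw1.eq_or_lt with rfl | hw1
  · exact hV1
  · exact (hmono.mono Ioo_subset_Ioc_self).eq_self_of_eq_self_on_rat hrat ⟨hw0, hw1⟩
end

section
/- For sampling M seats with replacement where seat occupant is participant i with probability f(w_i)/Σ_j f(w_j) and all seats carry equal voting weight, fairness (expected voting power of each participant equal to its weight for all weight vectors and all splittings) holds if and only if f is linear, i.e., f(w) = c·w for some c > 0. In particular, the splitting condition f(w) = f(xw) + f((1−x)w) for all w > 0, x ∈ (0,1) together with monotonicity implies f is linear. -/
/-!
Only the two-participant instance of fairness is needed: `f a / (f a + f 1) = a / (a + 1)`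
forces `f a = f 1 * a`. The splitting identity with `x = a / (a + b)` makes `f` additive on
`(0, ∞)`, hence `ℚ`-linear on positive rationals, and monotonicity squeezes every real
between rationals.
-/

section Additive

variable {f : ℝ → ℝ} (hadd : ∀ a > (0:ℝ), ∀ b > (0:ℝ), f (a + b) = f a + f b)
include hadd

lemma map_natCast_mul_of_map_add_s18 {n : ℕ} (hn : 0 < n) {w : ℝ} (hw : 0 < w) :
    f (n * w) = n * f w := by
  induction n, hn using Nat.le_induction with
  | base => simp
  | succ n hn ih =>
    have hnw : 0 < (n : ℝ) * w := by positivity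
    rw [Nat.cast_succ, add_mul, one_mul, hadd _ hnw _ hw, ih]
    ring

lemma map_ratCast_of_map_add {q : ℚ} (hq : 0 < q) : f q = q * f 1 := by
  obtain ⟨p, hp⟩ : ∃ p : ℕ, q.num = p :=
    ⟨q.num.toNat, (Int.toNat_of_nonneg (Rat.num_pos.2 hq).le).symm⟩
  have hp0 : 0 < p := by have := Rat.num_pos.2 hq; omega
  have hden : (q.den : ℝ) * q = p := by exact_mod_cast hp ▸ Rat.den_mul_eq_num q
  have key : (q.den : ℝ) * f q = q.den * (q * f 1) := by
    rw [← map_natCast_mul_of_map_add_s18 hadd q.den_pos (by exact_mod_cast hq), hden,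
      ← mul_assoc, hden, ← map_natCast_mul_of_map_add_s18 hadd hp0 one_pos, mul_one]
  exact mul_left_cancel₀ (by positivity) key

lemma eq_mul_of_map_add_of_monotoneOn (hmono : MonotoneOn f (Set.Ioi 0)) (hf1 : 0 < f 1)
    {w : ℝ} (hw : 0 < w) : f w = f 1 * w := by
  have hf_nonneg : 0 ≤ f w := by
    have := hmono hw (show 0 < w + w by positivity) (by linarith)
    linarith [hadd w hw w hw]
  suffices w = f w / f 1 by rw [eq_div_iff hf1.ne'] at this; linarith
  refine le_antisymm (le_of_forall_rat_lt_imp_le fun q hqw => ?_)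
    (le_of_forall_lt_rat_imp_le fun q hwq => ?_)
  · rcases le_or_gt (q : ℝ) 0 with hq | hq
    · exact hq.trans (by positivity)
    · rw [le_div_iff₀ hf1, ← map_ratCast_of_map_add hadd (by exact_mod_cast hq)]
      exact hmono hq hw hqw.le
  · have hq : (0 : ℝ) < q := hw.trans hwq
    rw [div_le_iff₀ hf1, ← map_ratCast_of_map_add hadd (by exact_mod_cast hq)]
    exact hmono hw hq hwq.le

end Additive

lemma map_add_of_splitting {f : ℝ → ℝ}
    (hsplit : ∀ w > (0:ℝ), ∀ x ∈ Set.Ioo (0:ℝ) 1, f w = f (x * w) + f ((1 - x) * w))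
    {a b : ℝ} (ha : 0 < a) (hb : 0 < b) : f (a + b) = f a + f b := by
  have hab : 0 < a + b := by positivity
  have hx : a / (a + b) ∈ Set.Ioo (0:ℝ) 1 :=
    ⟨by positivity, by rw [div_lt_one hab]; linarith⟩
  convert hsplit (a + b) hab _ hx using 3 <;> field_simp; ring

lemma eq_mul_of_div_add_eq {f : ℝ → ℝ} {a : ℝ} (ha : 0 < a) (hfa : 0 < f a) (hf1 : 0 < f 1)
    (h : f a / (f a + f 1) = a / (a + 1)) : f a = f 1 * a := by
  rw [div_eq_div_iff (by positivity) (by positivity)] at h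
  linarith

lemma share_eq_of_eq_mul {f : ℝ → ℝ} {c : ℝ} (hc : c ≠ 0)
    (hlin : ∀ w > (0:ℝ), f w = c * w) {n : ℕ} (w : Fin n → ℝ) (hw : ∀ i, 0 < w i)
    (i : Fin n) :
    f (w i) / ∑ j, f (w j) = w i / ∑ j, w j := by
  rw [Finset.sum_congr rfl fun j _ => hlin _ (hw j), ← Finset.mul_sum, hlin _ (hw i),
    mul_div_mul_left _ _ hc]

/-- for sampling with replacement with selection probabilities
f(w_i)/Σ_j f(w_j) and equal seat weights (so participant i's expected voting power is
f(w_i)/Σ_j f(w_j)), fairness over all weight configurations (hence all splittings) holds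
iff f is linear; and the splitting identity f(w) = f(xw) + f((1−x)w) together with
monotonicity already implies f is linear. -/
theorem stmt_18 (f : ℝ → ℝ) (hfpos : ∀ w > (0:ℝ), 0 < f w)
    (hmono : MonotoneOn f (Set.Ioi (0:ℝ))) :
    ((∀ (n : ℕ), 0 < n → ∀ w : Fin n → ℝ, (∀ i, 0 < w i) →
        ∀ i, f (w i) / ∑ j, f (w j) = w i / ∑ j, w j) ↔
      ∃ c > (0:ℝ), ∀ w > (0:ℝ), f w = c * w) ∧
    ((∀ w > (0:ℝ), ∀ x ∈ Set.Ioo (0:ℝ) 1, f w = f (x * w) + f ((1 - x) * w)) →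
      ∃ c > (0:ℝ), ∀ w > (0:ℝ), f w = c * w) := by
  have hf1 : 0 < f 1 := hfpos 1 one_pos
  refine ⟨⟨fun hfair => ⟨f 1, hf1, fun a ha => ?_⟩, fun ⟨c, hc, hlin⟩ _ _ => ?_⟩,
    fun hsplit => ⟨f 1, hf1, fun w hw => ?_⟩⟩
  · refine eq_mul_of_div_add_eq ha (hfpos a ha) hf1 ?_
    simpa [Fin.sum_univ_two] using hfair 2 two_pos ![a, 1] (by simp [Fin.forall_fin_two, ha]) 0
  · exact share_eq_of_eq_mul hc.ne' hlin
  · have hadd := fun a (ha : 0 < a) b (hb : 0 < b) => map_add_of_splitting hsplit ha hb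
    exact eq_mul_of_map_add_of_monotoneOn hadd hmono hf1 hw
end
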